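/- Let p be a monic real polynomial of degree d with d distinct roots, exactly r of which are real (so c = (d−r)/2 conjugate pairs). For 0 ≤ e ≤ d, the number of monic real polynomials g of degree e dividing p equals the coefficient of x^{d−e} y^{e} in (x+y)^r (x²+y²)^c. -/

import Mathlib

/-!
A monic divisor of the squarefree polynomial `p` is the product of a unique subset of its monic
irreducible factors, and its degree is the sum of their degrees. Over `ℝ` these factors are the
`r` linear factors `X - x` at the real roots and `(d - r) / 2` quadratics. Expanding
`∏_q (x ^ deg q + y ^ deg q) = (x + y) ^ r * (x ^ 2 + y ^ 2) ^ ((d - r) / 2)` over subsets of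
factors, the monomial `x ^ (d - e) * y ^ e` collects exactly the subsets of total degree `e`.
-/

open Polynomial

/-- The coefficient of x^{d−e} y^{e} in (x+y)^r (x²+y²)^{(d−r)/2}. -/
noncomputable def nuCoeff (d e r : ℕ) : ℕ :=
  MvPolynomial.coeff (Finsupp.single 0 (d - e) + Finsupp.single 1 e)
    (((MvPolynomial.X 0 + MvPolynomial.X 1) ^ r *
      (MvPolynomial.X 0 ^ 2 + MvPolynomial.X 1 ^ 2) ^ ((d - r) / 2) :
        MvPolynomial (Fin 2) ℕ))

open Finset UniqueFactorizationMonoid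

namespace Finset

@[to_additive]
theorem prod_comp_of_forall_eq_or_eq {ι κ M : Type*} [CommMonoid M] [DecidableEq κ]
    {s : Finset ι} {w : ι → κ} {a b : κ} (hab : a ≠ b) (hw : ∀ i ∈ s, w i = a ∨ w i = b)
    (f : κ → M) :
    ∏ i ∈ s, f (w i) = f a ^ #{i ∈ s | w i = a} * f b ^ #{i ∈ s | w i = b} := by
  rw [← prod_fiberwise_of_maps_to' (t := {a, b}) (by simpa using hw), prod_pair hab]
  simp only [prod_const]

end Finset

theorem MvPolynomial.coeff_prod_X_pow_add_X_pow {ι : Type*} (s : Finset ι) (w : ι → ℕ)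
    (e : ℕ) :
    coeff (Finsupp.single 0 (∑ i ∈ s, w i - e) + Finsupp.single 1 e)
      (∏ i ∈ s, (X 0 ^ w i + X 1 ^ w i) : MvPolynomial (Fin 2) ℕ) =
      #{t ∈ s.powerset | ∑ i ∈ t, w i = e} := by
  classical
  rw [prod_congr rfl fun i _ => add_comm (X 0 ^ w i) (X 1 ^ w i), prod_add]
  simp_rw [prod_pow_eq_pow_sum, coeff_sum, X_pow_eq_monomial,
    monomial_mul, coeff_monomial, mul_one]
  rw [card_filter]
  refine sum_congr rfl fun t ht => if_congr ?_ rfl rfl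
  have := sum_sdiff (mem_powerset.1 ht) (f := w)
  simp only [Finsupp.ext_iff, Fin.forall_fin_two, Finsupp.add_apply, Finsupp.single_apply,
    one_ne_zero, zero_ne_one, ↓reduceIte]
  omega

namespace UniqueFactorizationMonoid

variable {M : Type*} [CommMonoidWithZero M] [StrongNormalizationMonoid M]
  [UniqueFactorizationMonoid M] {a : M} {S : Finset M}

theorem primeFactors_prod_of_subset (hS : S ⊆ primeFactors a) :
    primeFactors (∏ q ∈ S, q) = S := by
  classical
  have hS' : ∀ q ∈ S.val, q ∈ normalizedFactors a := fun q hq => mem_primeFactors.1 (hS hq)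
  rw [← toFinset_normalizedFactors, prod_eq_multiset_prod, Multiset.map_id',
    normalizedFactors_prod_eq _ fun q hq => irreducible_of_normalized_factor q (hS' q hq),
    Multiset.map_congr rfl fun q hq => normalize_normalized_factor q (hS' q hq), Multiset.map_id',
    val_toFinset]

theorem normalize_prod_of_subset_primeFactors (hS : S ⊆ primeFactors a) :
    normalize (∏ q ∈ S, q) = ∏ q ∈ S, q := by
  rw [← coe_normalizeHom, map_prod]
  exact prod_congr rfl fun q hq => normalize_normalized_factor q (mem_primeFactors.1 (hS hq))

theorem radical_eq_self_of_squarefree (ha : Squarefree a) (hn : normalize a = a) :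
    radical a = a := by
  nontriviality M
  exact (radical_associated ha.isRadical ha.ne_zero).eq_of_normalized
    (normalize_prod_of_subset_primeFactors subset_rfl) hn

theorem injOn_prod_powerset_primeFactors (a : M) :
    Set.InjOn (fun S => ∏ q ∈ S, q) (↑(primeFactors a).powerset : Set (Finset M)) :=
  fun _ hS _ hT h =>
    (primeFactors_prod_of_subset (mem_powerset.1 hS)).symm.trans
      ((congrArg primeFactors h).trans (primeFactors_prod_of_subset (mem_powerset.1 hT)))

theorem image_prod_powerset_primeFactors [Nontrivial M] (ha : Squarefree a) :
    (fun S => ∏ q ∈ S, q) '' ↑(primeFactors a).powerset = {b | normalize b = b ∧ b ∣ a} := by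
  ext b
  constructor
  · rintro ⟨S, hS, rfl⟩
    rw [mem_coe, mem_powerset] at hS
    exact ⟨normalize_prod_of_subset_primeFactors hS,
      (prod_dvd_prod_of_subset _ _ _ hS).trans (radical_associated ha.isRadical ha.ne_zero).dvd⟩
  · rintro ⟨hn, hb⟩
    refine ⟨primeFactors b, ?_, radical_eq_self_of_squarefree (ha.squarefree_of_dvd hb) hn⟩
    exact mem_powerset.2 <| radical_dvd_radical_iff_primeFactors_subset_primeFactors.1
      (radical_dvd_radical hb ha.ne_zero)

end UniqueFactorizationMonoid

namespace Polynomial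

variable {K : Type*} [Field K] [DecidableEq K] {p : K[X]}

theorem monic_of_mem_primeFactors {q : K[X]} (hq : q ∈ primeFactors p) : q.Monic := by
  rw [mem_primeFactors] at hq
  exact (normalize_eq_self_iff_monic (prime_of_normalized_factor q hq).ne_zero).1
    (normalize_normalized_factor q hq)

theorem natDegree_prod_of_subset_primeFactors {S : Finset K[X]} (hS : S ⊆ primeFactors p) :
    (∏ q ∈ S, q).natDegree = ∑ q ∈ S, q.natDegree :=
  natDegree_prod_of_monic _ _ fun _ hq => monic_of_mem_primeFactors (hS hq)

theorem ncard_monic_dvd_natDegree_eq (hp : Squarefree p) (e : ℕ) :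
    {g | g.Monic ∧ g.natDegree = e ∧ g ∣ p}.ncard =
      #{S ∈ (primeFactors p).powerset | ∑ q ∈ S, q.natDegree = e} := by
  have hdiv : {g | g.Monic ∧ g.natDegree = e ∧ g ∣ p} =
      (fun S => ∏ q ∈ S, q) '' ↑(primeFactors p).powerset ∩ {g | g.natDegree = e} := by
    rw [image_prod_powerset_primeFactors hp]
    ext g
    simp only [Set.mem_inter_iff, Set.mem_ofPred_eq]
    constructor
    · rintro ⟨hg, hdeg, hdvd⟩
      exact ⟨⟨hg.normalize_eq_self, hdvd⟩, hdeg⟩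
    · rintro ⟨⟨hn, hdvd⟩, hdeg⟩
      have hg : g ≠ 0 := ne_zero_of_dvd_ne_zero hp.ne_zero hdvd
      exact ⟨(normalize_eq_self_iff_monic hg).1 hn, hdeg, hdvd⟩
  rw [hdiv, ← Set.image_inter_preimage,
    ((injOn_prod_powerset_primeFactors p).mono Set.inter_subset_left).ncard_image,
    ← Set.ncard_coe_finset]
  congr 1
  ext S
  simp only [coe_filter, Set.mem_inter_iff, Set.mem_preimage, Set.mem_ofPred_eq, mem_coe,
    mem_powerset]
  exact and_congr_right fun hS => by rw [natDegree_prod_of_subset_primeFactors hS]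

theorem sum_natDegree_primeFactors (hp : Squarefree p) :
    ∑ q ∈ primeFactors p, q.natDegree = p.natDegree := by
  rw [← natDegree_prod_of_subset_primeFactors subset_rfl]
  exact natDegree_eq_of_degree_eq (degree_eq_degree_of_associated
    (radical_associated hp.isRadical hp.ne_zero))

theorem card_primeFactors_filter_natDegree_eq_one (hp : p ≠ 0) :
    #{q ∈ primeFactors p | q.natDegree = 1} = #p.roots.toFinset := by
  have : {q ∈ primeFactors p | q.natDegree = 1} = p.roots.toFinset.image (fun x => X - C x) := by
    ext q
    simp only [mem_filter, mem_image, Multiset.mem_toFinset, mem_primeFactors,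
      Polynomial.mem_normalizedFactors_iff hp, mem_roots hp]
    constructor
    · rintro ⟨⟨-, hq, hdvd⟩, hdeg⟩
      have hq' : q = X - C (-q.coeff 0) := by
        rw [map_neg, sub_neg_eq_add]
        exact hq.eq_X_add_C hdeg
      exact ⟨-q.coeff 0, dvd_iff_isRoot.1 (hq' ▸ hdvd), hq'.symm⟩
    · rintro ⟨x, hx, rfl⟩
      exact ⟨⟨irreducible_X_sub_C x, monic_X_sub_C x, dvd_iff_isRoot.2 hx⟩, natDegree_X_sub_C x⟩
  rw [this, card_image_of_injective _ fun x y h => C_injective (sub_right_injective h)]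

theorem natDegree_eq_one_or_two_of_irreducible {q : ℝ[X]} (hq : Irreducible q) :
    q.natDegree = 1 ∨ q.natDegree = 2 := by
  have := hq.natDegree_pos
  have := hq.natDegree_le_two
  omega

end Polynomial

theorem monic_divisor_count_general (d e r : ℕ)
    (p : Polynomial ℝ) (hp : p.Monic) (hdeg : p.natDegree = d)
    (hnodup : ((p.map (algebraMap ℝ ℂ)).roots).Nodup)
    (hr : r = p.roots.toFinset.card) :
    Set.ncard {g : Polynomial ℝ | g.Monic ∧ g.natDegree = e ∧ g ∣ p} =
      nuCoeff d e r := by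
  have hsq : Squarefree p :=
    ((nodup_aroots_iff_of_splits hp.ne_zero (IsAlgClosed.splits _)).1 hnodup).squarefree
  have hdeg_factor : ∀ q ∈ primeFactors p, q.natDegree = 1 ∨ q.natDegree = 2 := fun q hq =>
    natDegree_eq_one_or_two_of_irreducible <|
      irreducible_of_normalized_factor q (mem_primeFactors.1 hq)
  have hlinear : #{q ∈ primeFactors p | q.natDegree = 1} = r :=
    hr ▸ card_primeFactors_filter_natDegree_eq_one hsq.ne_zero
  have hcount : r + 2 * #{q ∈ primeFactors p | q.natDegree = 2} = d := by
    have hsum := sum_comp_of_forall_eq_or_eq (by decide : 1 ≠ 2) hdeg_factor id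
    simp only [id, smul_eq_mul, hlinear, sum_natDegree_primeFactors hsq] at hsum
    omega
  have hprod := prod_comp_of_forall_eq_or_eq (by decide : 1 ≠ 2) hdeg_factor
    (fun n => (MvPolynomial.X 0 ^ n + MvPolynomial.X 1 ^ n : MvPolynomial (Fin 2) ℕ))
  simp only [pow_one, hlinear] at hprod
  rw [ncard_monic_dvd_natDegree_eq hsq, nuCoeff,
    show (d - r) / 2 = #{q ∈ primeFactors p | q.natDegree = 2} by omega, ← hprod, ← hdeg,
    ← sum_natDegree_primeFactors hsq, MvPolynomial.coeff_prod_X_pow_add_X_pow]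

/-- For a monic real polynomial p of degree d with d distinct complex roots,
exactly r of them real, and 0 ≤ e ≤ d, the number of monic real divisors of p
of degree e equals the coefficient of x^{d−e} y^e in (x+y)^r (x²+y²)^{(d−r)/2}. -/
theorem monic_divisor_count (d e r : ℕ) (he : e ≤ d)
    (p : Polynomial ℝ) (hp : p.Monic) (hdeg : p.natDegree = d)
    (hnodup : ((p.map (algebraMap ℝ ℂ)).roots).Nodup)
    (hr : r = p.roots.toFinset.card) :
    Set.ncard {g : Polynomial ℝ | g.Monic ∧ g.natDegree = e ∧ g ∣ p} =
      nuCoeff d e r :=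
  monic_divisor_count_general d e r p hp hdeg hnodup hr
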